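/- Let Tᵢ be the Demazure–Lusztig operator on ℚ(q,t)[x₁,…,xₙ] satisfying Tᵢ² = (t-1)Tᵢ + t, Tᵢ(xᵢ·TᵢF) = t·x_{i+1}F, and Tᵢ(g) = tg for any g symmetric in xᵢ,x_{i+1}. For Laurent polynomials F, G: if TᵢF = G, then both F + G and t·x_{i+1}F + xᵢG are symmetric in xᵢ and x_{i+1}. -/

import Mathlib

/-- The Laurent monomial `x_a^e` in the ring of Laurent polynomials
`K[x₁^{±1},…,xₙ^{±1}]`, modeled as `AddMonoidAlgebra K (Fin n →₀ ℤ)`. -/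
noncomputable def LX (K : Type*) [Field K] (n : ℕ) (a : Fin n) (e : ℤ) :
    AddMonoidAlgebra K (Fin n →₀ ℤ) :=
  AddMonoidAlgebra.single (Finsupp.single a e) 1

/-- The algebra automorphism of `K[x₁^{±1},…,xₙ^{±1}]` exchanging the variables
`x_a` and `x_b`. -/
noncomputable def swapVars (K : Type*) [Field K] (n : ℕ) (a b : Fin n) :
    AddMonoidAlgebra K (Fin n →₀ ℤ) ≃ₐ[K] AddMonoidAlgebra K (Fin n →₀ ℤ) :=
  AddMonoidAlgebra.domCongr K K (Finsupp.domCongr (Equiv.swap a b))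

/-!
Write `s` for the swap of `xᵢ, x_{i+1}` and `d = xᵢ/x_{i+1}`. Adding the defining relation
`(1 - d) T f = t (1 - d) s f + (t - 1)(f - s f)` for `f = F` and for `f = G = T F`, and
using `T G = (t - 1) G + t F`, everything collapses to `(1 - t d)(H - s H) = 0` with
`H = F + G`. Since `1 - t d` is a nonzero element of a domain, `H` is symmetric. The second
claim follows from the first and the relation for `F` alone, multiplied by `x_{i+1}`.
-/

section DemazureLusztig

variable {K A : Type*} [CommRing K] [CommRing A] [Algebra K A]
  (s : A ≃ₐ[K] A) (d : A) (t : K)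

theorem mul_sub_swap_add_apply_eq_zero (T : A →ₗ[K] A)
    (hT : ∀ f, (1 - d) * T f = t • ((1 - d) * s f) + (t - 1) • (f - s f))
    (hsq : ∀ f, T (T f) = (t - 1) • T f + t • f) (f : A) :
    (1 - t • d) * (f + T f - s (f + T f)) = 0 := by
  have hf := hT f
  have hTf := hT (T f)
  rw [hsq] at hTf
  simp only [Algebra.smul_def, map_sub, map_one, map_add] at hf hTf ⊢
  linear_combination hf + hTf

theorem swap_add_apply_eq [NoZeroDivisors A] (T : A →ₗ[K] A)
    (hT : ∀ f, (1 - d) * T f = t • ((1 - d) * s f) + (t - 1) • (f - s f))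
    (hsq : ∀ f, T (T f) = (t - 1) • T f + t • f) (hd : 1 - t • d ≠ 0) (f : A) :
    s (f + T f) = f + T f :=
  (sub_eq_zero.mp ((mul_eq_zero.mp (mul_sub_swap_add_apply_eq_zero s d t T hT hsq f)).resolve_left
    hd)).symm

theorem swap_smul_mul_add_mul_eq {u v F G : A} (hsu : s u = v) (hsv : s v = u) (hdv : d * v = u)
    (hG : (1 - d) * G = t • ((1 - d) * s F) + (t - 1) • (F - s F))
    (hsum : s (F + G) = F + G) :
    s (t • (v * F) + u * G) = t • (v * F) + u * G := by
  rw [map_add, map_smul, map_mul, map_mul, hsu, hsv]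
  rw [map_add] at hsum
  simp only [Algebra.smul_def, map_sub, map_one] at hG ⊢
  linear_combination v * hsum + v * hG + (G - algebraMap K A t * s F) * hdv

end DemazureLusztig

theorem AddMonoidAlgebra.one_sub_single_ne_zero {k G : Type*} [Ring k] [Nontrivial k]
    [AddMonoid G] {μ : G} (hμ : μ ≠ 0) (r : k) :
    (1 : AddMonoidAlgebra k G) - AddMonoidAlgebra.single μ r ≠ 0 := by
  intro h
  have h0 := congrArg (AddMonoidAlgebra.coeff · 0) h
  simp [AddMonoidAlgebra.one_def, AddMonoidAlgebra.coeff_single, hμ.symm] at h0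

section LaurentMonomials

variable {K : Type*} [Field K] {n : ℕ}

theorem LX_mul_LX (a : Fin n) (e f : ℤ) : LX K n a e * LX K n a f = LX K n a (e + f) := by
  simp [LX, AddMonoidAlgebra.single_mul_single]

theorem LX_zero (a : Fin n) : LX K n a 0 = 1 := by
  simp [LX, AddMonoidAlgebra.one_def]

theorem swapVars_LX (a b c : Fin n) (e : ℤ) :
    swapVars K n a b (LX K n c e) = LX K n (Equiv.swap a b c) e := by
  simp [swapVars, LX, AddMonoidAlgebra.domCongr_single]

theorem one_sub_smul_LX_mul_LX_ne_zero {a b : Fin n} (hab : a ≠ b) {e : ℤ} (he : e ≠ 0)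
    (f : ℤ) (t : K) : 1 - t • (LX K n a e * LX K n b f) ≠ 0 := by
  have hμ : Finsupp.single a e + Finsupp.single b f ≠ 0 := fun h => by
    simpa [Finsupp.single_apply, hab.symm, he] using DFunLike.congr_fun h a
  convert AddMonoidAlgebra.one_sub_single_ne_zero hμ t using 2
  simp [LX, AddMonoidAlgebra.single_mul_single]

end LaurentMonomials

theorem Ti_eq_implies_symmetric_general (K : Type*) [Field K] (t : K)
    (n i : ℕ) (hi : i + 1 < n)
    (T : AddMonoidAlgebra K (Fin n →₀ ℤ) →ₗ[K] AddMonoidAlgebra K (Fin n →₀ ℤ))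
    (hT : ∀ f,
      (1 - LX K n ⟨i, Nat.lt_of_succ_lt hi⟩ 1 * LX K n ⟨i + 1, hi⟩ (-1)) * T f
        = t • ((1 - LX K n ⟨i, Nat.lt_of_succ_lt hi⟩ 1 * LX K n ⟨i + 1, hi⟩ (-1)) *
            swapVars K n ⟨i, Nat.lt_of_succ_lt hi⟩ ⟨i + 1, hi⟩ f)
          + (t - 1) • (f - swapVars K n ⟨i, Nat.lt_of_succ_lt hi⟩ ⟨i + 1, hi⟩ f))
    (hsq : ∀ f, T (T f) = (t - 1) • T f + t • f)
    (F G : AddMonoidAlgebra K (Fin n →₀ ℤ)) (hFG : T F = G) :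
    swapVars K n ⟨i, Nat.lt_of_succ_lt hi⟩ ⟨i + 1, hi⟩ (F + G) = F + G ∧
    swapVars K n ⟨i, Nat.lt_of_succ_lt hi⟩ ⟨i + 1, hi⟩
        (t • (LX K n ⟨i + 1, hi⟩ 1 * F) + LX K n ⟨i, Nat.lt_of_succ_lt hi⟩ 1 * G)
      = t • (LX K n ⟨i + 1, hi⟩ 1 * F) + LX K n ⟨i, Nat.lt_of_succ_lt hi⟩ 1 * G := by
  subst hFG
  have hab : (⟨i, Nat.lt_of_succ_lt hi⟩ : Fin n) ≠ ⟨i + 1, hi⟩ := by simp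
  have hsum := swap_add_apply_eq _ _ t T hT hsq
    (one_sub_smul_LX_mul_LX_ne_zero hab one_ne_zero (-1) t) F
  refine ⟨hsum, swap_smul_mul_add_mul_eq _ _ t ?_ ?_ ?_ (hT F) hsum⟩
  · simp [swapVars_LX]
  · simp [swapVars_LX]
  · rw [mul_assoc, LX_mul_LX, neg_add_cancel, LX_zero, mul_one]

/-- Let `Tᵢ` be the Demazure–Lusztig operator on Laurent polynomials
over `ℚ(q,t)` (characterized by its defining formula, multiplied through by
`1 - xᵢ/x_{i+1}`), satisfying `Tᵢ² = (t-1)Tᵢ + t`, `Tᵢ(xᵢ·TᵢF) = t x_{i+1} F`,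
and `Tᵢ g = t g` for `g` symmetric in `xᵢ, x_{i+1}`.  If `TᵢF = G` then both
`F + G` and `t x_{i+1} F + xᵢ G` are symmetric in `xᵢ` and `x_{i+1}`. -/
theorem Ti_eq_implies_symmetric (K : Type*) [Field K] (q t : K)
    (n i : ℕ) (hi : i + 1 < n)
    (T : AddMonoidAlgebra K (Fin n →₀ ℤ) →ₗ[K] AddMonoidAlgebra K (Fin n →₀ ℤ))
    (hT : ∀ f,
      (1 - LX K n ⟨i, Nat.lt_of_succ_lt hi⟩ 1 * LX K n ⟨i + 1, hi⟩ (-1)) * T f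
        = t • ((1 - LX K n ⟨i, Nat.lt_of_succ_lt hi⟩ 1 * LX K n ⟨i + 1, hi⟩ (-1)) *
            swapVars K n ⟨i, Nat.lt_of_succ_lt hi⟩ ⟨i + 1, hi⟩ f)
          + (t - 1) • (f - swapVars K n ⟨i, Nat.lt_of_succ_lt hi⟩ ⟨i + 1, hi⟩ f))
    (hsq : ∀ f, T (T f) = (t - 1) • T f + t • f)
    (hXT : ∀ f, T (LX K n ⟨i, Nat.lt_of_succ_lt hi⟩ 1 * T f)
      = t • (LX K n ⟨i + 1, hi⟩ 1 * f))
    (hsym : ∀ g, swapVars K n ⟨i, Nat.lt_of_succ_lt hi⟩ ⟨i + 1, hi⟩ g = g → T g = t • g)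
    (F G : AddMonoidAlgebra K (Fin n →₀ ℤ)) (hFG : T F = G) :
    swapVars K n ⟨i, Nat.lt_of_succ_lt hi⟩ ⟨i + 1, hi⟩ (F + G) = F + G ∧
    swapVars K n ⟨i, Nat.lt_of_succ_lt hi⟩ ⟨i + 1, hi⟩
        (t • (LX K n ⟨i + 1, hi⟩ 1 * F) + LX K n ⟨i, Nat.lt_of_succ_lt hi⟩ 1 * G)
      = t • (LX K n ⟨i + 1, hi⟩ 1 * F) + LX K n ⟨i, Nat.lt_of_succ_lt hi⟩ 1 * G :=
  Ti_eq_implies_symmetric_general K t n i hi T hT hsq F G hFG
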